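/- arXiv:1604.05396 — 4 statements merged into one kernel-verified Lean document; each statement's English description precedes it below -/
import Mathlib

section
/- Fix real numbers β > 0 and γ > 0, and define the sequence a_m = (β/(16γ))·γ^m/m² for m ≥ 1. Then for every m ≥ 2, the Cauchy product coefficient satisfies Σ_{j=1}^{m−1} a_j · a_{m−j} ≤ (β/γ)·a_m. In other words, the formal power series A(t) = Σ_{m≥1} a_m t^m satisfies A(t)² ≪ (β/γ)·A(t), where ≪ denotes coefficientwise inequality. -/
/-!
For `j + k = m` one has `1/(jk) = (1/j + 1/k)/m`, hence `1/(jk)² ≤ 2(1/j² + 1/k²)/m²`.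
Summing over `j` and using `∑_{j ≥ 1} 1/j² ≤ 2` gives `∑_{j+k=m} 1/(jk)² ≤ 8/m²`, and the factor
`γ^j γ^k = γ^m` is common to all terms.
-/

open Finset

lemma inv_mul_sq_le {K : Type*} [Field K] [LinearOrder K] [IsStrictOrderedRing K] {x y : K}
    (hx : x ≠ 0) (hy : y ≠ 0) (hxy : x + y ≠ 0) :
    ((x * y) ^ 2)⁻¹ ≤ 2 * ((x ^ 2)⁻¹ + (y ^ 2)⁻¹) / (x + y) ^ 2 := by
  have hxy_inv : (x * y)⁻¹ = (x⁻¹ + y⁻¹) / (x + y) := by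
    field_simp
    ring
  calc ((x * y) ^ 2)⁻¹ = (x⁻¹ + y⁻¹) ^ 2 / (x + y) ^ 2 := by rw [← inv_pow, hxy_inv, div_pow]
    _ ≤ 2 * ((x ^ 2)⁻¹ + (y ^ 2)⁻¹) / (x + y) ^ 2 := by
      rw [← inv_pow, ← inv_pow]
      gcongr
      exact add_sq_le

lemma sum_Ico_inv_mul_sub_sq_le (m : ℕ) :
    ∑ j ∈ Ico 1 m, (((j : ℝ) * (m - j : ℕ)) ^ 2)⁻¹ ≤ 8 / (m : ℝ) ^ 2 := by
  have hpointwise : ∀ j ∈ Ico 1 m, (((j : ℝ) * (m - j : ℕ)) ^ 2)⁻¹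
      ≤ 2 * (((j : ℝ) ^ 2)⁻¹ + (((m - j : ℕ) : ℝ) ^ 2)⁻¹) / (m : ℝ) ^ 2 := by
    intro j hj
    have hj' := mem_Ico.mp hj
    have hm : ((j : ℕ) : ℝ) + ((m - j : ℕ) : ℝ) = m := by
      rw [← Nat.cast_add, Nat.add_sub_cancel' hj'.2.le]
    rw [← hm]
    exact inv_mul_sq_le (Nat.cast_ne_zero.mpr (by omega)) (Nat.cast_ne_zero.mpr (by omega))
      (by rw [hm]; exact Nat.cast_ne_zero.mpr (by omega))
  have hinv_sq : ∑ j ∈ Ico 1 m, ((j : ℝ) ^ 2)⁻¹ ≤ 2 := by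
    have h := sum_Ioo_inv_sq_le (α := ℝ) 0 m
    rw [← Ico_add_one_left_eq_Ioo] at h
    norm_num at h
    exact h
  have hreflect : ∑ j ∈ Ico 1 m, (((m - j : ℕ) : ℝ) ^ 2)⁻¹ = ∑ j ∈ Ico 1 m, ((j : ℝ) ^ 2)⁻¹ := by
    rw [sum_Ico_reflect (fun j => ((j : ℝ) ^ 2)⁻¹) 1 (Nat.le_succ m), Nat.add_sub_cancel_left, Nat.add_sub_cancel]
  calc _ ≤ ∑ j ∈ Ico 1 m, 2 * (((j : ℝ) ^ 2)⁻¹ + (((m - j : ℕ) : ℝ) ^ 2)⁻¹) / (m : ℝ) ^ 2 :=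
        sum_le_sum hpointwise
    _ = 2 * (∑ j ∈ Ico 1 m, ((j : ℝ) ^ 2)⁻¹ + ∑ j ∈ Ico 1 m, (((m - j : ℕ) : ℝ) ^ 2)⁻¹)
          / (m : ℝ) ^ 2 := by rw [← sum_div, ← mul_sum, sum_add_distrib]
    _ ≤ 2 * (2 + 2) / (m : ℝ) ^ 2 := by
      rw [hreflect]
      gcongr
    _ = 8 / (m : ℝ) ^ 2 := by norm_num

lemma sum_Ico_mul_sub_le_of_eq_mul_pow_div_sq {c γ : ℝ} (hγ : 0 ≤ γ) {a : ℕ → ℝ}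
    (ha : ∀ m : ℕ, a m = c * γ ^ m / (m : ℝ) ^ 2) (m : ℕ) :
    ∑ j ∈ Ico 1 m, a j * a (m - j) ≤ 8 * c * a m := by
  have hterm : ∀ j ∈ Ico 1 m, a j * a (m - j) = c ^ 2 * γ ^ m * (((j : ℝ) * (m - j : ℕ)) ^ 2)⁻¹ := by
    intro j hj
    rw [ha, ha, ← pow_mul_pow_sub γ (mem_Ico.mp hj).2.le]
    ring
  calc ∑ j ∈ Ico 1 m, a j * a (m - j)
      = c ^ 2 * γ ^ m * ∑ j ∈ Ico 1 m, (((j : ℝ) * (m - j : ℕ)) ^ 2)⁻¹ := by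
        rw [sum_congr rfl hterm, mul_sum]
    _ ≤ c ^ 2 * γ ^ m * (8 / (m : ℝ) ^ 2) := by
      gcongr
      exact sum_Ico_inv_mul_sub_sq_le m
    _ = 8 * c * a m := by
      rw [ha]
      ring

theorem kodaira_series_domination_general (β γ : ℝ) (hγ : 0 < γ)
    (a : ℕ → ℝ) (ha : ∀ m : ℕ, a m = β / (16 * γ) * γ ^ m / (m : ℝ) ^ 2) :
    ∀ m : ℕ, 2 ≤ m → ∑ j ∈ Finset.Ico 1 m, a j * a (m - j) ≤ (β / γ) * a m := by
  intro m _
  set c := β / (16 * γ)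
  have hβγ : β / γ = 16 * c := by
    simp only [c]
    field_simp
  have hca : 0 ≤ c * a m := by
    rw [ha, ← mul_div_assoc, ← mul_assoc, ← sq]
    positivity
  calc ∑ j ∈ Ico 1 m, a j * a (m - j) ≤ 8 * c * a m :=
        sum_Ico_mul_sub_le_of_eq_mul_pow_div_sq hγ.le ha m
    _ ≤ β / γ * a m := by
      rw [hβγ]
      linarith

/-- The coefficients `a_m = (β/(16γ))·γ^m/m²` satisfy the Cauchy-product domination
`Σ_{j=1}^{m−1} a_j a_{m−j} ≤ (β/γ)·a_m` for every `m ≥ 2`. -/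
theorem kodaira_series_domination (β γ : ℝ) (hβ : 0 < β) (hγ : 0 < γ)
    (a : ℕ → ℝ) (ha : ∀ m : ℕ, a m = β / (16 * γ) * γ ^ m / (m : ℝ) ^ 2) :
    ∀ m : ℕ, 2 ≤ m → ∑ j ∈ Finset.Ico 1 m, a j * a (m - j) ≤ (β / γ) * a m :=
  kodaira_series_domination_general β γ hγ a ha
end

section
/- Let V be a real inner product space, let G ⊆ V be a cone (i.e., closed under multiplication by positive scalars), and let v ∈ G be a nonzero vector such that the open ball of radius ε > 0 centered at v is contained in G, where ε ≤ ‖v‖. Then the open circular cone C(v, arcsin(ε/‖v‖)) = { w ∈ V \ {0} : ⟨w, v⟩ / (‖w‖·‖v‖) > cos(arcsin(ε/‖v‖)) } is contained in G. -/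
/-!
The point `t • w` with `t = ⟪w, v⟫ / ‖w‖²` is the orthogonal projection of `v` onto the line
`ℝ w`, at distance `‖v‖ sin ∠(w, v)` from `v`. The angle condition says exactly that this distance
is less than `ε`, and `t > 0`, so `t • w` lies in the ball and hence in `G`; scaling back by
`t⁻¹` keeps it in the cone.
-/

open Real

theorem mem_of_smul_mem_of_pos {V : Type*} [AddCommGroup V] [Module ℝ V] {G : Set V}
    (hcone : ∀ t : ℝ, 0 < t → ∀ w ∈ G, t • w ∈ G) {t : ℝ} (ht : 0 < t) {w : V}
    (hw : t • w ∈ G) : w ∈ G := by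
  simpa [inv_smul_smul₀ ht.ne'] using hcone t⁻¹ (inv_pos.mpr ht) _ hw

theorem norm_inner_div_smul_sub_sq {V : Type*} [NormedAddCommGroup V] [InnerProductSpace ℝ V]
    {w : V} (hw : w ≠ 0) (v : V) :
    ‖(inner ℝ w v / ‖w‖ ^ 2) • w - v‖ ^ 2 = ‖v‖ ^ 2 - inner ℝ w v ^ 2 / ‖w‖ ^ 2 := by
  have hw' : ‖w‖ ≠ 0 := norm_ne_zero_iff.mpr hw
  rw [norm_sub_sq_real, norm_smul, real_inner_smul_left, Real.norm_eq_abs, mul_pow, sq_abs]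
  field_simp
  ring

theorem pos_and_sub_lt_of_sqrt_lt_div {c p r ε : ℝ} (hp : 0 < p) (hr : 0 < r)
    (h : √(1 - (ε / r) ^ 2) < c / (p * r)) : 0 < c ∧ r ^ 2 - c ^ 2 / p ^ 2 < ε ^ 2 := by
  have hcos_pos : 0 < c / (p * r) := (sqrt_nonneg _).trans_lt h
  have hcos_sq : 1 - (ε / r) ^ 2 < (c / (p * r)) ^ 2 := (sqrt_lt' hcos_pos).mp h
  refine ⟨(div_pos_iff_of_pos_right (by positivity)).mp hcos_pos, ?_⟩
  calc r ^ 2 - c ^ 2 / p ^ 2 = r ^ 2 * (1 - (c / (p * r)) ^ 2) := by field_simp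
    _ < r ^ 2 * (ε / r) ^ 2 := by gcongr; linarith
    _ = ε ^ 2 := by field_simp

theorem circularCone_subset_cone_general {V : Type*} [NormedAddCommGroup V]
    [InnerProductSpace ℝ V] (G : Set V)
    (hcone : ∀ t : ℝ, 0 < t → ∀ w ∈ G, t • w ∈ G)
    (v : V) (ε : ℝ) (hε : 0 < ε) (hεv : ε ≤ ‖v‖)
    (hball : Metric.ball v ε ⊆ G) :
    ∀ w : V, w ≠ 0 →
      (inner ℝ w v : ℝ) / (‖w‖ * ‖v‖) > Real.cos (Real.arcsin (ε / ‖v‖)) → w ∈ G := by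
  intro w hw hangle
  rw [cos_arcsin] at hangle
  obtain ⟨hinner, hdist⟩ :=
    pos_and_sub_lt_of_sqrt_lt_div (norm_pos_iff.mpr hw) (hε.trans_le hεv) hangle
  have ht : 0 < inner ℝ w v / ‖w‖ ^ 2 := div_pos hinner (by positivity)
  refine mem_of_smul_mem_of_pos hcone ht (hball ?_)
  rw [Metric.mem_ball, dist_eq_norm, ← pow_lt_pow_iff_left₀ (norm_nonneg _) hε.le two_ne_zero,
    norm_inner_div_smul_sub_sq hw]
  exact hdist

/-- If a cone `G` contains the open ball of radius `ε` around a nonzero `v ∈ G`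
(with `ε ≤ ‖v‖`), then `G` contains the open circular cone `C(v, arcsin(ε/‖v‖))`. -/
theorem circularCone_subset_cone {V : Type*} [NormedAddCommGroup V]
    [InnerProductSpace ℝ V] (G : Set V)
    (hcone : ∀ t : ℝ, 0 < t → ∀ w ∈ G, t • w ∈ G)
    (v : V) (hv : v ∈ G) (hv0 : v ≠ 0) (ε : ℝ) (hε : 0 < ε) (hεv : ε ≤ ‖v‖)
    (hball : Metric.ball v ε ⊆ G) :
    ∀ w : V, w ≠ 0 →
      (inner ℝ w v : ℝ) / (‖w‖ * ‖v‖) > Real.cos (Real.arcsin (ε / ‖v‖)) → w ∈ G :=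
  circularCone_subset_cone_general G hcone v ε hε hεv hball
end

section
/- Let V be a real normed vector space of dimension at least 2 and let G ⊆ V be a nonempty open convex subset such that the closure of G is contained in G ∪ {0}. Then G = V. -/
open Filter Topology

theorem Convex.zero_mem_of_mem_of_neg_mem {𝕜 E : Type*} [Field 𝕜] [LinearOrder 𝕜]
    [IsStrictOrderedRing 𝕜] [AddCommGroup E] [Module 𝕜 E] {s : Set E} (hs : Convex 𝕜 s)
    {x : E} (hx : x ∈ s) (hnx : -x ∈ s) : (0 : E) ∈ s := by
  let _ : Invertible (2 : 𝕜) := invertibleOfNonzero two_ne_zero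
  simpa only [midpoint_self_neg] using hs.midpoint_mem hx hnx

/-- `G` is relatively clopen in the preconnected set `{x}ᶜ`, which it meets because `x` is not
isolated. -/
theorem compl_singleton_subset_of_closure_subset_union {X : Type*} [TopologicalSpace X] {x : X}
    [(𝓝[≠] x).NeBot] (hconn : IsPreconnected ({x}ᶜ : Set X)) {G : Set X} (hG : IsOpen G)
    (hne : G.Nonempty) (hcl : closure G ⊆ G ∪ {x}) : {x}ᶜ ⊆ G :=
  hconn.subset_of_closure_inter_subset hG
    (Set.inter_comm G _ ▸ (dense_compl_singleton x).inter_open_nonempty G hG hne)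
    fun _ ⟨hyG, hyx⟩ => (hcl hyG).resolve_right hyx

/-- In a real normed space of dimension at least 2, a nonempty open convex set whose
closure is contained in `G ∪ {0}` must be the whole space. -/
theorem open_convex_closure_subset_insert_zero {V : Type*} [NormedAddCommGroup V]
    [NormedSpace ℝ V] (hdim : 2 ≤ Module.rank ℝ V) (G : Set V)
    (hne : G.Nonempty) (hopen : IsOpen G) (hconv : Convex ℝ G)
    (hcl : closure G ⊆ G ∪ {0}) :
    G = Set.univ := by
  have hrank : 1 < Module.rank ℝ V := lt_of_lt_of_le (by norm_num) hdim
  have : Nontrivial V := rank_pos_iff_nontrivial.1 (zero_lt_one.trans hrank)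
  have hcompl : {0}ᶜ ⊆ G := compl_singleton_subset_of_closure_subset_union
    (isConnected_compl_singleton_of_one_lt_rank hrank 0).isPreconnected hopen hne hcl
  obtain ⟨z, hz⟩ := exists_ne (0 : V)
  have hzero : (0 : V) ∈ G :=
    hconv.zero_mem_of_mem_of_neg_mem (hcompl hz) (hcompl (neg_ne_zero.2 hz))
  exact Set.eq_univ_of_forall fun y =>
    (eq_or_ne y 0).elim (fun hy => hy ▸ hzero) fun hy => hcompl hy
end

section
/- Let R be an associative unital ring, D, I ∈ R with bracket [x,y] = xy − yx, and suppose I^{n+1} = 0 for some n (so e^{I} := Σ_{k=0}^{n} I^k/k! makes sense in a ℚ-algebra R). Assume C := −[[D, I], I] commutes with I. Then D·e^{I} − e^{I}·D = e^{I}·[D, I] − e^{I}·(½·C). -/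
/-!
Write `B = ⁅D, I⁆`. Since `⁅B, I⁆` commutes with `I`, the Leibniz rule
`⁅D, I ^ (k + 1)⁆ = ⁅D, I ^ k⁆ * I + I ^ k * B` gives by induction
`⁅D, I ^ k⁆ = k • I ^ (k - 1) * B + (k choose 2) • I ^ (k - 2) * ⁅B, I⁆`.
Dividing by `k!` turns the coefficients into `1 / (k - 1)!` and `1 / (2 (k - 2)!)`, so summing
over `k` gives `⁅D, exp I⁆ = exp I * B + ½ • exp I * ⁅B, I⁆`, the shifted sums agreeing because
`I` is nilpotent. As `⁅B, I⁆ = -C`, this is the claimed formula.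
-/

open Finset

section Commutator

variable {R : Type*} [Ring R]

theorem lie_pow_succ (D I : R) (k : ℕ) :
    ⁅D, I ^ (k + 1)⁆ = ⁅D, I ^ k⁆ * I + I ^ k * ⁅D, I⁆ := by
  simp only [Ring.lie_def, pow_succ]
  noncomm_ring

theorem lie_pow_add_two {D I : R} (h : Commute ⁅⁅D, I⁆, I⁆ I) (k : ℕ) :
    ⁅D, I ^ (k + 2)⁆ =
      (k + 2) • (I ^ (k + 1) * ⁅D, I⁆) + (k + 2).choose 2 • (I ^ k * ⁅⁅D, I⁆, I⁆) := by
  have hBI : ⁅D, I⁆ * I = I * ⁅D, I⁆ + ⁅⁅D, I⁆, I⁆ := by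
    rw [Ring.lie_def ⁅D, I⁆]; abel
  induction k with
  | zero =>
    simp only [lie_pow_succ, hBI, pow_zero, pow_one, zero_add, Nat.choose_self, one_mul, one_smul]
    abel
  | succ k ih =>
    rw [lie_pow_succ, ih, add_mul, smul_mul_assoc, smul_mul_assoc, mul_assoc, mul_assoc, hBI,
      h.eq, mul_add, ← mul_assoc, ← mul_assoc, ← pow_succ, ← pow_succ, Nat.choose_succ_succ' (k + 2),
      Nat.choose_one_right]
    simp only [add_smul, smul_add, one_smul]
    abel

end Commutator

section Exp

attribute [local instance] LieRing.ofAssociativeRing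

variable {R : Type*} [Ring R] [Algebra ℚ R]

theorem inv_factorial_smul_lie_pow_add_two {D I : R} (h : Commute ⁅⁅D, I⁆, I⁆ I) (k : ℕ) :
    ((k + 2).factorial : ℚ)⁻¹ • ⁅D, I ^ (k + 2)⁆ =
      ((k + 1).factorial : ℚ)⁻¹ • (I ^ (k + 1) * ⁅D, I⁆) +
        (2⁻¹ * (k.factorial : ℚ)⁻¹) • (I ^ k * ⁅⁅D, I⁆, I⁆) := by
  rw [lie_pow_add_two h, smul_add, ← Nat.cast_smul_eq_nsmul ℚ, ← Nat.cast_smul_eq_nsmul ℚ,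
    smul_smul, smul_smul, Nat.factorial_succ, Nat.factorial_succ]
  congr 2
  · push_cast; field_simp; ring
  · rw [Nat.cast_choose_two]; push_cast; field_simp; ring

theorem IsNilpotent.lie_exp {D I : R} (hI : IsNilpotent I) (h : Commute ⁅⁅D, I⁆, I⁆ I) :
    ⁅D, IsNilpotent.exp I⁆ =
      IsNilpotent.exp I * ⁅D, I⁆ + (2⁻¹ : ℚ) • (IsNilpotent.exp I * ⁅⁅D, I⁆, I⁆) := by
  obtain ⟨N, hN⟩ := hI
  have hpow (m : ℕ) : I ^ (N + m) = 0 := by rw [pow_add, hN, zero_mul]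
  have hB : IsNilpotent.exp I * ⁅D, I⁆ =
      ∑ k ∈ range N, ((k + 1).factorial : ℚ)⁻¹ • (I ^ (k + 1) * ⁅D, I⁆) + ⁅D, I⁆ := by
    rw [IsNilpotent.exp_eq_sum (hpow 1), sum_mul, sum_range_succ']
    simp only [smul_mul_assoc, pow_zero, Nat.factorial_zero, Nat.cast_one, inv_one, one_smul,
      one_mul]
  have hC : (2⁻¹ : ℚ) • (IsNilpotent.exp I * ⁅⁅D, I⁆, I⁆) =
      ∑ k ∈ range N, (2⁻¹ * (k.factorial : ℚ)⁻¹) • (I ^ k * ⁅⁅D, I⁆, I⁆) := by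
    rw [IsNilpotent.exp_eq_sum hN, sum_mul, smul_sum]
    simp only [smul_mul_assoc, smul_smul]
  rw [hB, hC, IsNilpotent.exp_eq_sum (hpow 2), lie_sum, sum_range_succ', sum_range_succ']
  simp only [lie_smul, inv_factorial_smul_lie_pow_add_two h, sum_add_distrib]
  simp only [zero_add, pow_one, pow_zero, Nat.factorial_zero, Nat.factorial_one, Nat.cast_one,
    inv_one, one_smul, Ring.lie_def D 1, mul_one, one_mul, sub_self, add_zero]
  abel

end Exp

/-- The bracket identity `[D, e^{I}] = e^{I}·[D,I] − e^{I}·(½C)` where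
`C = −[[D,I],I]` commutes with `I` and `I` is nilpotent. -/
theorem bracket_exp_formula {R : Type*} [Ring R] [Algebra ℚ R] (D I : R) (n : ℕ)
    (hI : I ^ (n + 1) = 0)
    (hC : (-((D * I - I * D) * I - I * (D * I - I * D))) * I =
          I * (-((D * I - I * D) * I - I * (D * I - I * D)))) :
    D * (∑ k ∈ range (n + 1), ((k.factorial : ℚ)⁻¹) • I ^ k) -
        (∑ k ∈ range (n + 1), ((k.factorial : ℚ)⁻¹) • I ^ k) * D =
      (∑ k ∈ range (n + 1), ((k.factorial : ℚ)⁻¹) • I ^ k) * (D * I - I * D) -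
        (∑ k ∈ range (n + 1), ((k.factorial : ℚ)⁻¹) • I ^ k) *
          (((1 : ℚ) / 2) • (-((D * I - I * D) * I - I * (D * I - I * D)))) := by
  have hcomm : Commute ⁅⁅D, I⁆, I⁆ I := by
    simpa only [Ring.lie_def] using Commute.neg_left_iff.mp hC
  have key := IsNilpotent.lie_exp ⟨n + 1, hI⟩ hcomm
  simp only [Ring.lie_def, IsNilpotent.exp_eq_sum hI] at key
  rw [key, one_div, smul_neg, mul_neg, sub_neg_eq_add, mul_smul_comm]
end
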